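/- Let λ ≠ μ be real numbers and let I be an open interval containing 0 on which μe^{λx} − λe^{μx} ≠ 0. For a twice differentiable function y: I → ℝ, define on I: x̃(x) = (e^{μx} − e^{λx})/(μe^{λx} − λe^{μx}), ỹ(x) = (μ−λ) y(x)/(μe^{λx} − λe^{μx}), and g(x) = (λe^{μx}(y'(x) − μ y(x)) − μe^{λx}(y'(x) − λ y(x)))/((λ−μ) e^{(λ+μ)x}). Then for every x ∈ I: ỹ'(x) = g(x)·x̃'(x), and g'(x) = [((λe^{μx} − μe^{λx})³/((λ−μ)³ e^{2(λ+μ)x}))·(y''(x) − (λ+μ) y'(x) + λμ y(x))]·x̃'(x). In particular, where x̃' ≠ 0, the second derivative of ỹ with respect to x̃ equals ((λe^{μx} − μe^{λx})³/((λ−μ)³ e^{2(λ+μ)x}))·(y'' − (λ+μ)y' + λμ y), so y solves y'' − (λ+μ)y' + λμ y = 0 if and only if ỹ, as a function of x̃, solves ỹ'' = 0. -/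

import Mathlib

/-!
The substitution is chosen so that the two solutions `e^{λx}`, `e^{μx}` of the ODE become affine
in `x̃`: the combination `μe^{λx} − λe^{μx} = D` becomes the constant `μ − λ` and the difference
`e^{μx} − e^{λx}` becomes `(μ − λ) x̃`. The two derivative identities are quotient-rule
computations. Since `x̃' = (λ − μ)² e^{(λ+μ)x} / D²` vanishes nowhere on `I`, the quotient `ỹ'/x̃'`
agrees with `g` on the open set `I`, hence has derivative `g'`; and `H = −D³/((λ−μ)³ e^{2(λ+μ)x})`
vanishes nowhere either.
-/

open Real Filter Topology

namespace ExpPointTransform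

noncomputable section

def denom (lam mu x : ℝ) : ℝ := mu * exp (lam * x) - lam * exp (mu * x)

def newX (lam mu x : ℝ) : ℝ := (exp (mu * x) - exp (lam * x)) / denom lam mu x

def newY (lam mu : ℝ) (y : ℝ → ℝ) (x : ℝ) : ℝ := (mu - lam) * y x / denom lam mu x

def newXDeriv (lam mu x : ℝ) : ℝ :=
  (lam - mu) ^ 2 * exp (lam * x) * exp (mu * x) / denom lam mu x ^ 2

def slope (lam mu : ℝ) (y v : ℝ → ℝ) (x : ℝ) : ℝ :=
  (lam * exp (mu * x) * (v x - mu * y x) - mu * exp (lam * x) * (v x - lam * y x)) /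
    ((lam - mu) * exp ((lam + mu) * x))

def factor (lam mu x : ℝ) : ℝ :=
  (lam * exp (mu * x) - mu * exp (lam * x)) ^ 3 / ((lam - mu) ^ 3 * exp (2 * (lam + mu) * x))

end

lemma hasDerivAt_exp_const_mul (c x : ℝ) :
    HasDerivAt (fun t => exp (c * t)) (c * exp (c * x)) x :=
  (((hasDerivAt_id' x).const_mul c).exp).congr_deriv (by ring)

lemma exp_add_mul (lam mu x : ℝ) : exp ((lam + mu) * x) = exp (lam * x) * exp (mu * x) := by
  rw [← exp_add, add_mul]

section

variable {lam mu x : ℝ}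

lemma hasDerivAt_denom :
    HasDerivAt (denom lam mu) (mu * (lam * exp (lam * x)) - lam * (mu * exp (mu * x))) x :=
  ((hasDerivAt_exp_const_mul lam x).const_mul mu).sub
    ((hasDerivAt_exp_const_mul mu x).const_mul lam)

lemma hasDerivAt_newX (hD : denom lam mu x ≠ 0) :
    HasDerivAt (newX lam mu) (newXDeriv lam mu x) x := by
  refine (((hasDerivAt_exp_const_mul mu x).sub (hasDerivAt_exp_const_mul lam x)).div
    hasDerivAt_denom hD).congr_deriv ?_
  unfold newXDeriv
  unfold denom at hD ⊢
  simp only [Pi.sub_apply]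
  field_simp
  ring

lemma newXDeriv_ne_zero (hne : lam ≠ mu) (hD : denom lam mu x ≠ 0) : newXDeriv lam mu x ≠ 0 := by
  unfold newXDeriv
  have := sub_ne_zero.2 hne
  positivity

lemma factor_ne_zero (hne : lam ≠ mu) (hD : denom lam mu x ≠ 0) : factor lam mu x ≠ 0 := by
  have hD' : lam * exp (mu * x) - mu * exp (lam * x) ≠ 0 := by
    rw [← neg_sub]; exact neg_ne_zero.2 hD
  have := sub_ne_zero.2 hne
  unfold factor
  positivity

lemma hasDerivAt_newY {y v : ℝ → ℝ} (hy : HasDerivAt y (v x) x) (hD : denom lam mu x ≠ 0) :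
    HasDerivAt (newY lam mu y) (slope lam mu y v x * newXDeriv lam mu x) x := by
  refine ((hy.const_mul (mu - lam)).div hasDerivAt_denom hD).congr_deriv ?_
  unfold slope newXDeriv
  rw [exp_add_mul]
  unfold denom at hD ⊢
  field_simp
  ring

lemma hasDerivAt_slope (hne : lam ≠ mu) {y v : ℝ → ℝ} {a : ℝ} (hy : HasDerivAt y (v x) x)
    (hv : HasDerivAt v a x) (hD : denom lam mu x ≠ 0) :
    HasDerivAt (slope lam mu y v)
      (factor lam mu x * (a - (lam + mu) * v x + lam * mu * y x) * newXDeriv lam mu x) x := by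
  have hnum := (((hasDerivAt_exp_const_mul mu x).const_mul lam).mul (hv.sub (hy.const_mul mu))).sub
    (((hasDerivAt_exp_const_mul lam x).const_mul mu).mul (hv.sub (hy.const_mul lam)))
  refine (hnum.div ((hasDerivAt_exp_const_mul (lam + mu) x).const_mul (lam - mu))
    (mul_ne_zero (sub_ne_zero.2 hne) (exp_ne_zero _))).congr_deriv ?_
  have hexp2 : exp (2 * (lam + mu) * x) = (exp (lam * x) * exp (mu * x)) ^ 2 := by
    rw [show 2 * (lam + mu) * x = (lam + mu) * x + (lam + mu) * x by ring, exp_add, exp_add_mul]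
    ring
  unfold factor newXDeriv
  simp only [Pi.sub_apply, Pi.mul_apply]
  rw [hexp2, exp_add_mul]
  unfold denom at hD ⊢
  field_simp
  ring

end

end ExpPointTransform

open ExpPointTransform in
theorem stmt13 (lam mu : ℝ) (hne : lam ≠ mu) (I : Set ℝ)
    (hIopen : IsOpen I)
    (hden : ∀ x ∈ I, mu * exp (lam * x) - lam * exp (mu * x) ≠ 0)
    (y : ℝ → ℝ)
    (hy : ∀ x ∈ I, DifferentiableAt ℝ y x ∧ DifferentiableAt ℝ (deriv y) x) :
    (let xt : ℝ → ℝ := fun x =>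
      (exp (mu * x) - exp (lam * x)) / (mu * exp (lam * x) - lam * exp (mu * x))
    let yt : ℝ → ℝ := fun x =>
      (mu - lam) * y x / (mu * exp (lam * x) - lam * exp (mu * x))
    let g : ℝ → ℝ := fun x =>
      (lam * exp (mu * x) * (deriv y x - mu * y x) -
        mu * exp (lam * x) * (deriv y x - lam * y x)) /
        ((lam - mu) * exp ((lam + mu) * x))
    let H : ℝ → ℝ := fun x =>
      (lam * exp (mu * x) - mu * exp (lam * x)) ^ 3 /
        ((lam - mu) ^ 3 * exp (2 * (lam + mu) * x))
    let L : ℝ → ℝ := fun x =>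
      deriv (deriv y) x - (lam + mu) * deriv y x + lam * mu * y x
    -- ỹ' = g·x̃'
    (∀ x ∈ I, deriv yt x = g x * deriv xt x) ∧
    -- g' = (H·(y'' − (λ+μ)y' + λμ y))·x̃'
    (∀ x ∈ I, deriv g x = H x * L x * deriv xt x) ∧
    -- where x̃' ≠ 0 the second derivative of ỹ with respect to x̃ equals
    -- H·(y'' − (λ+μ)y' + λμ y); in particular y solves the ODE iff ỹ'' = 0
    (∀ x ∈ I, deriv xt x ≠ 0 →
      deriv (fun t => deriv yt t / deriv xt t) x / deriv xt x = H x * L x ∧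
      (L x = 0 ↔
        deriv (fun t => deriv yt t / deriv xt t) x / deriv xt x = 0))) := by
  intro xt yt g H L
  have hxt (x : ℝ) (hx : x ∈ I) : deriv xt x = newXDeriv lam mu x :=
    (hasDerivAt_newX (hden x hx)).deriv
  have hyt (x : ℝ) (hx : x ∈ I) : deriv yt x = g x * deriv xt x := by
    rw [hxt x hx]
    exact (hasDerivAt_newY (hy x hx).1.hasDerivAt (hden x hx)).deriv
  have hg (x : ℝ) (hx : x ∈ I) : deriv g x = H x * L x * deriv xt x := by
    rw [hxt x hx]
    exact (hasDerivAt_slope hne (hy x hx).1.hasDerivAt (hy x hx).2.hasDerivAt (hden x hx)).deriv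
  refine ⟨hyt, hg, fun x hx hxne => ?_⟩
  have hratio : (fun t => deriv yt t / deriv xt t) =ᶠ[𝓝 x] g := by
    filter_upwards [hIopen.mem_nhds hx] with t ht
    rw [hyt t ht, mul_div_cancel_right₀ _ (hxt t ht ▸ newXDeriv_ne_zero hne (hden t ht))]
  have hsecond : deriv (fun t => deriv yt t / deriv xt t) x / deriv xt x = H x * L x := by
    rw [hratio.deriv_eq, hg x hx, mul_div_cancel_right₀ _ hxne]
  have hH : H x ≠ 0 := factor_ne_zero hne (hden x hx)
  exact ⟨hsecond, by rw [hsecond, mul_eq_zero_iff_left hH]⟩
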